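/- Let Vec = ℂ[∂]·l be the Lie* algebra with μ_0(l,l) = ∂l, μ_1(l,l) = 2l, μ_n(l,l) = 0 for n ≥ 2 (extended by sesquilinearity). Form h(Vec ⊗ ℂ[t]) := (Vec ⊗ ℂ[t]) / Im(∂ ⊗ 1 + 1 ⊗ d/dt), with the Lie bracket [a_[n], b_[m]] = Σ_{j≥0} C(n,j)·(μ_j(a,b))_[n+m−j] (a_[n] the class of a ⊗ tⁿ, n ≥ 0). Then the ℂ-linear map determined by ∂^k l ⊗ p(t) ↦ (−1)^{k+1} p^{(k)}(t)·d/dt (in particular l ⊗ tⁿ ↦ −tⁿ·d/dt) is well-defined on h(Vec ⊗ ℂ[t]) and is a Lie algebra isomorphism onto Der_ℂ(ℂ[t]), the Lie algebra of ℂ-linear derivations of the polynomial ring ℂ[t]. -/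

import Mathlib

/-!
In `h(Vec ⊗ ℂ[t])` the relation `(∂a)_[n] = -n·a_[n-1]` lets `∂` be traded for `-d/dt` acting
on `tⁿ`, so `a_[n] ↦ a(-d/dt) tⁿ` is well defined; it sends `l_[n]` to `tⁿ`, and as the `l_[n]`
span, it is a linear isomorphism onto `ℂ[t]`. Composing with `p ↦ -p·d/dt` gives `Φ`, a linear
isomorphism because every derivation of `ℂ[t]` is `p·d/dt` with `p` its value at `t`.
As `μ_j(l,l) = 0` for `j ≥ 2`, the Borcherds bracket of generators is
`[l_[n], l_[m]] = (∂l)_[n+m] + 2n·l_[n+m-1] = (n - m) l_[n+m-1]`, matching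
`[tⁿ d/dt, tᵐ d/dt] = (m - n) tⁿ⁺ᵐ⁻¹ d/dt`.
-/

/-- The free rank-one `ℂ[∂]`-module `Vec = ℂ[∂]·l`, modelled as `Polynomial ℂ`
(the generator `l` is `1`, and `∂` acts as multiplication by the variableX). -/
noncomputable def vecD : Polynomial ℂ →ₗ[ℂ] Polynomial ℂ :=
  LinearMap.mulLeft ℂ (Polynomial.X : Polynomial ℂ)

/-- Defining conditions on the `μ_n` of `Vec`: sesquilinearity and
`μ₀(l,l) = ∂l`, `μ₁(l,l) = 2l`, `μ_n(l,l) = 0` for `n ≥ 2`. -/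
def VirCond (mu : ℕ → Polynomial ℂ →ₗ[ℂ] Polynomial ℂ →ₗ[ℂ] Polynomial ℂ) : Prop :=
  (∀ (n : ℕ) (a b : Polynomial ℂ), mu n (vecD a) b = (-(n : ℂ)) • mu (n - 1) a b) ∧
  (∀ (n : ℕ) (a b : Polynomial ℂ),
      mu n a (vecD b) = vecD (mu n a b) + (n : ℂ) • mu (n - 1) a b) ∧
  (mu 0 1 1 = Polynomial.X) ∧
  (mu 1 1 1 = 2) ∧
  (∀ n : ℕ, 2 ≤ n → mu n 1 1 = 0)

/-- The operator `∂ ⊗ 1 + 1 ⊗ d/dt` on `Vec ⊗ ℂ[t]`, realized on the model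
`ℕ →₀ Polynomial ℂ` in which `a ⊗ tⁿ` is `Finsupp.single n a`
(so `a ⊗ tⁿ ↦ ∂a ⊗ tⁿ + n·a ⊗ tⁿ⁻¹`). -/
noncomputable def vecTop : (ℕ →₀ Polynomial ℂ) →ₗ[ℂ] (ℕ →₀ Polynomial ℂ) :=
  Finsupp.lsum ℂ fun n : ℕ => (Finsupp.lsingle n).comp vecD + (n : ℂ) • Finsupp.lsingle (n - 1)

/-- The class `a_[n]` of `a ⊗ tⁿ` in `h(Vec ⊗ ℂ[t]) = (Vec ⊗ ℂ[t]) / Im(∂⊗1 + 1⊗d/dt)`. -/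
noncomputable def vecEl (n : ℕ) (a : Polynomial ℂ) :
    (ℕ →₀ Polynomial ℂ) ⧸ LinearMap.range vecTop :=
  (LinearMap.range vecTop).mkQ (Finsupp.single n a)

/-- The derivation `d/dt` of the polynomial ring `ℂ[t]`. -/
noncomputable def ddt : Derivation ℂ (Polynomial ℂ) (Polynomial ℂ) where
  toLinearMap := Polynomial.derivative
  map_one_eq_zero' := by simp
  leibniz' := fun a b => by
    simp [Polynomial.derivative_mul, smul_eq_mul]
    ring

open Polynomial

local notation "HVec" => (ℕ →₀ Polynomial ℂ) ⧸ LinearMap.range vecTop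

lemma vecTop_single (n : ℕ) (a : ℂ[X]) :
    vecTop (Finsupp.single n a)
      = Finsupp.single n (X * a) + (n : ℂ) • Finsupp.single (n - 1) a := by
  simp [vecTop, vecD]

lemma vecEl_X_mul (n : ℕ) (a : ℂ[X]) : vecEl n (X * a) = -((n : ℂ) • vecEl (n - 1) a) := by
  have h : (LinearMap.range vecTop).mkQ (vecTop (Finsupp.single n a)) = 0 :=
    (Submodule.Quotient.mk_eq_zero _).mpr ⟨_, rfl⟩
  rw [vecTop_single, map_add, map_smul] at h
  exact eq_neg_of_add_eq_zero_left h

lemma vecEl_smul (n : ℕ) (c : ℂ) (a : ℂ[X]) : vecEl n (c • a) = c • vecEl n a := by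
  rw [vecEl, vecEl, ← Finsupp.smul_single, map_smul]

lemma finsum_choose_smul_vecEl_mu_one
    {mu : ℕ → ℂ[X] →ₗ[ℂ] ℂ[X] →ₗ[ℂ] ℂ[X]} (h0 : mu 0 1 1 = X) (h1 : mu 1 1 1 = 2)
    (h2 : ∀ n, 2 ≤ n → mu n 1 1 = 0) (n m : ℕ) :
    ∑ᶠ j : ℕ, (n.choose j : ℂ) • vecEl (n + m - j) (mu j 1 1)
      = ((n : ℂ) - m) • vecEl (n + m - 1) 1 := by
  have hsupp : (Function.support fun j => (n.choose j : ℂ) • vecEl (n + m - j) (mu j 1 1))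
      ⊆ ({0, 1} : Finset ℕ) := by
    intro j hj
    by_contra hj01
    simp only [Finset.coe_insert, Finset.coe_singleton, Set.mem_insert_iff,
      Set.mem_singleton_iff, not_or] at hj01
    exact hj (by simp [h2 j (by omega), vecEl])
  have hX : vecEl (n + m) (X : ℂ[X]) = -(((n + m : ℕ) : ℂ) • vecEl (n + m - 1) 1) := by
    rw [← mul_one X, vecEl_X_mul]
  have h2' : vecEl (n + m - 1) (2 : ℂ[X]) = (2 : ℂ) • vecEl (n + m - 1) 1 := by
    rw [← vecEl_smul, two_smul, one_add_one_eq_two]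
  rw [finsum_eq_sum_of_support_subset _ hsupp, Finset.sum_pair zero_ne_one, h0, h1, Nat.sub_zero,
    hX, h2', Nat.choose_zero_right, Nat.choose_one_right, smul_smul, ← neg_smul, smul_smul,
    ← add_smul]
  push_cast
  congr 1
  ring

lemma vecEl_X_pow_mem_span (k n : ℕ) :
    vecEl n ((X : ℂ[X]) ^ k) ∈ Submodule.span ℂ (Set.range fun m => vecEl m 1) := by
  induction k generalizing n with
  | zero => exact Submodule.subset_span ⟨n, rfl⟩
  | succ k ih =>
    rw [pow_succ', vecEl_X_mul]
    exact Submodule.neg_mem _ (Submodule.smul_mem _ _ (ih _))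

lemma span_vecEl_one : Submodule.span ℂ (Set.range fun m => vecEl m (1 : ℂ[X])) = ⊤ := by
  rw [eq_top_iff]
  rintro x -
  obtain ⟨u, rfl⟩ := Submodule.mkQ_surjective _ x
  induction u using Finsupp.induction_linear with
  | zero => simp
  | add f g hf hg => rw [map_add]; exact Submodule.add_mem _ hf hg
  | single n a =>
    change vecEl n a ∈ _
    induction a using Polynomial.induction_on' with
    | add p q hp hq => rw [vecEl, Finsupp.single_add, map_add]; exact Submodule.add_mem _ hp hq
    | monomial k c =>
      rw [← smul_X_eq_monomial, vecEl_smul]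
      exact Submodule.smul_mem _ _ (vecEl_X_pow_mem_span k n)

noncomputable def vecToPoly : (ℕ →₀ ℂ[X]) →ₗ[ℂ] ℂ[X] :=
  Finsupp.lsum ℂ fun n =>
    (LinearMap.applyₗ ((X : ℂ[X]) ^ n)).comp (aeval (-derivative : Module.End ℂ ℂ[X])).toLinearMap

lemma vecToPoly_single (n : ℕ) (a : ℂ[X]) :
    vecToPoly (Finsupp.single n a) = aeval (-derivative : Module.End ℂ ℂ[X]) a (X ^ n) := by
  simp [vecToPoly]

lemma vecToPoly_comp_vecTop : vecToPoly ∘ₗ vecTop = 0 := by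
  refine Finsupp.lhom_ext fun n a => ?_
  have h : (-derivative : Module.End ℂ ℂ[X]) (X ^ n) = -((n : ℂ) • X ^ (n - 1)) := by
    simp [derivative_X_pow, smul_eq_C_mul]
  simp only [LinearMap.comp_apply, vecTop_single, map_add, map_smul, vecToPoly_single,
    mul_comm X a, map_mul, aeval_X, Module.End.mul_apply, h, map_neg, LinearMap.zero_apply]
  exact neg_add_cancel _

noncomputable def hVecToPoly : HVec →ₗ[ℂ] ℂ[X] :=
  (LinearMap.range vecTop).liftQ vecToPoly (LinearMap.range_le_ker_iff.mpr vecToPoly_comp_vecTop)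

lemma hVecToPoly_vecEl (n : ℕ) (a : ℂ[X]) :
    hVecToPoly (vecEl n a) = aeval (-derivative : Module.End ℂ ℂ[X]) a (X ^ n) :=
  vecToPoly_single n a

noncomputable def polyToHVec : ℂ[X] →ₗ[ℂ] HVec :=
  Polynomial.lsum fun m => LinearMap.toSpanSingleton ℂ HVec (vecEl m 1)

lemma polyToHVec_monomial (m : ℕ) (c : ℂ) : polyToHVec (monomial m c) = c • vecEl m 1 := by
  simp [polyToHVec]

lemma polyToHVec_X_pow (m : ℕ) : polyToHVec ((X : ℂ[X]) ^ m) = vecEl m 1 := by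
  rw [X_pow_eq_monomial, polyToHVec_monomial, one_smul]

noncomputable def hVecEquivPoly : HVec ≃ₗ[ℂ] ℂ[X] :=
  LinearEquiv.ofLinearMap hVecToPoly polyToHVec
    (Polynomial.lhom_ext' fun m => LinearMap.ext_ring <| by
      simp [polyToHVec_monomial, hVecToPoly_vecEl, X_pow_eq_monomial])
    (LinearMap.ext_on_range span_vecEl_one fun m => by
      simp [hVecToPoly_vecEl, polyToHVec_X_pow])

lemma hVecEquivPoly_apply (x : HVec) : hVecEquivPoly x = hVecToPoly x := rfl

lemma Derivation.lie_smul_smul {R A : Type*} [CommRing R] [CommRing A] [Algebra R A]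
    (D : Derivation R A A) (p q : A) : ⁅p • D, q • D⁆ = (p * D q - q * D p) • D := by
  ext a
  simp only [Derivation.commutator_apply, Derivation.smul_apply, smul_eq_mul, Derivation.leibniz]
  ring

lemma mkDerivation_eq_smul_ddt (p : ℂ[X]) : mkDerivation ℂ p = p • ddt :=
  derivation_ext <| by simp [ddt]

noncomputable def hVecDerivEquiv : HVec ≃ₗ[ℂ] Derivation ℂ ℂ[X] ℂ[X] :=
  (hVecEquivPoly.trans (LinearEquiv.neg ℂ)).trans (mkDerivationEquiv ℂ)

lemma hVecDerivEquiv_apply (x : HVec) : hVecDerivEquiv x = (-hVecToPoly x) • ddt := by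
  simp [hVecDerivEquiv, hVecEquivPoly_apply, mkDerivation_eq_smul_ddt]

lemma hVecDerivEquiv_vecEl_X_pow (k n : ℕ) :
    hVecDerivEquiv (vecEl n (X ^ k))
      = ((-1 : ℂ) ^ (k + 1)) • (((derivative ^ k) ((X : ℂ[X]) ^ n)) • ddt) := by
  have hpow : aeval (-derivative : Module.End ℂ ℂ[X]) ((X : ℂ[X]) ^ k)
      = (-1 : ℂ) ^ k • derivative ^ k := by
    rw [map_pow, aeval_X, ← neg_one_smul ℂ derivative, _root_.smul_pow]
  rw [hVecDerivEquiv_apply, hVecToPoly_vecEl, hpow, LinearMap.smul_apply, ← smul_assoc, pow_succ,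
    mul_neg_one, neg_smul]

lemma hVecEquivPoly_symm_monomial (n : ℕ) (c : ℂ) :
    hVecEquivPoly.symm (monomial n c) = c • vecEl n 1 :=
  polyToHVec_monomial n c

lemma X_pow_mul_derivative_X_pow {R : Type*} [CommSemiring R] (n m : ℕ) :
    (X : R[X]) ^ n * derivative (X ^ m) = C (m : R) * X ^ (n + m - 1) := by
  rcases m with _ | m
  · simp
  · rw [derivative_X_pow, mul_left_comm, ← pow_add]
    congr 2

lemma hVecToPoly_bracket {B : HVec →ₗ[ℂ] HVec →ₗ[ℂ] HVec}
    (hB : ∀ n m : ℕ, B (vecEl n 1) (vecEl m 1) = ((n : ℂ) - m) • vecEl (n + m - 1) 1) (x y : HVec) :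
    hVecToPoly (B x y)
      = hVecToPoly y * derivative (hVecToPoly x) - hVecToPoly x * derivative (hVecToPoly y) := by
  obtain ⟨p, rfl⟩ := hVecEquivPoly.symm.surjective x
  obtain ⟨q, rfl⟩ := hVecEquivPoly.symm.surjective y
  simp only [← hVecEquivPoly_apply, LinearEquiv.apply_symm_apply]
  induction p using Polynomial.induction_on' with
  | add p p' hp hp' =>
    simp only [map_add, LinearMap.add_apply, hp, hp']
    ring
  | monomial n c =>
    induction q using Polynomial.induction_on' with
    | add q q' hq hq' =>
      simp only [map_add, hq, hq']
      ring
    | monomial m d =>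
      simp only [hVecEquivPoly_symm_monomial, map_smul, LinearMap.smul_apply, hB,
        hVecEquivPoly_apply, hVecToPoly_vecEl, map_one, Module.End.one_apply]
      have hnm := X_pow_mul_derivative_X_pow (R := ℂ) m n
      have hmn := X_pow_mul_derivative_X_pow (R := ℂ) n m
      rw [add_comm m n] at hnm
      simp only [← C_mul_X_pow_eq_monomial, derivative_C_mul, smul_eq_C_mul, map_sub]
      linear_combination (C c * C d) * (hmn - hnm)

lemma hVecDerivEquiv_map_bracket {B : HVec →ₗ[ℂ] HVec →ₗ[ℂ] HVec}
    (hB : ∀ n m : ℕ, B (vecEl n 1) (vecEl m 1) = ((n : ℂ) - m) • vecEl (n + m - 1) 1) (x y : HVec) :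
    hVecDerivEquiv (B x y) = ⁅hVecDerivEquiv x, hVecDerivEquiv y⁆ := by
  rw [hVecDerivEquiv_apply, hVecDerivEquiv_apply, hVecDerivEquiv_apply, Derivation.lie_smul_smul,
    hVecToPoly_bracket hB]
  congr 1
  change _ = _ * derivative _ - _ * derivative _
  rw [derivative_neg, derivative_neg]
  ring

/-- the ℂ-linear map determined by
`∂^k l ⊗ p(t) ↦ (−1)^{k+1} p^{(k)}(t)·d/dt` is well defined on `h(Vec ⊗ ℂ[t])`
(with its Borcherds bracket) and is a Lie algebra isomorphism onto `Der_ℂ(ℂ[t])`. -/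
theorem stmt14
    (mu : ℕ → Polynomial ℂ →ₗ[ℂ] Polynomial ℂ →ₗ[ℂ] Polynomial ℂ)
    (hmu : VirCond mu)
    (B : ((ℕ →₀ Polynomial ℂ) ⧸ LinearMap.range vecTop) →ₗ[ℂ]
        ((ℕ →₀ Polynomial ℂ) ⧸ LinearMap.range vecTop) →ₗ[ℂ]
        ((ℕ →₀ Polynomial ℂ) ⧸ LinearMap.range vecTop))
    (hB : ∀ (a b : Polynomial ℂ) (n m : ℕ),
        B (vecEl n a) (vecEl m b)
          = ∑ᶠ j : ℕ, ((n.choose j : ℂ)) • vecEl (n + m - j) (mu j a b)) :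
    ∃ Φ : ((ℕ →₀ Polynomial ℂ) ⧸ LinearMap.range vecTop) →ₗ[ℂ]
        Derivation ℂ (Polynomial ℂ) (Polynomial ℂ),
      (∀ k n : ℕ,
        Φ (vecEl n (Polynomial.X ^ k))
          = ((-1 : ℂ) ^ (k + 1)) •
              (((Polynomial.derivative ^ k) ((Polynomial.X : Polynomial ℂ) ^ n)) • ddt)) ∧
      Function.Bijective Φ ∧
      (∀ x y, Φ (B x y) = ⁅Φ x, Φ y⁆) := by
  obtain ⟨-, -, hmu0, hmu1, hmu2⟩ := hmu
  have hB1 : ∀ n m : ℕ, B (vecEl n 1) (vecEl m 1) = ((n : ℂ) - m) • vecEl (n + m - 1) 1 :=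
    fun n m => (hB 1 1 n m).trans (finsum_choose_smul_vecEl_mu_one hmu0 hmu1 hmu2 n m)
  exact ⟨hVecDerivEquiv.toLinearMap, hVecDerivEquiv_vecEl_X_pow, hVecDerivEquiv.bijective,
    hVecDerivEquiv_map_bracket hB1⟩
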